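/- Fix q_1, …, q_N, v_1, …, v_N, do_1, …, do_N ∈ ℝ^d and fix an index j. For K = (k_1, …, k_N) with k_l ∈ ℝ^d, define L_i(K) := Σ_{l=1}^N e^{q_i^⊤ k_l}, P_{il}(K) := e^{q_i^⊤ k_l} / L_i(K), o_i(K) := Σ_{l=1}^N P_{il}(K) v_l, and φ(K) := Σ_{i=1}^N do_i^⊤ o_i(K). Then φ is differentiable in k_j and its gradient with respect to k_j is ∇_{k_j} φ = Σ_{i=1}^N P_{ij}(K) ( do_i^⊤ v_j − D_i(K) ) q_i, where D_i(K) := do_i^⊤ o_i(K). (Equation (8): the memory-efficient formula for the key gradient dk_j.) -/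

import Mathlib

/-- `L_i(K) := Σ_l e^{q_iᵀ k_l}`. -/
noncomputable def LiK {N d : ℕ} (q : Fin N → Fin d → ℝ) (i : Fin N)
    (K : Fin N → Fin d → ℝ) : ℝ :=
  ∑ l, Real.exp (∑ s, q i s * K l s)

/-- `P_{il}(K) := e^{q_iᵀ k_l} / L_i(K)`. -/
noncomputable def PiK {N d : ℕ} (q : Fin N → Fin d → ℝ) (i l : Fin N)
    (K : Fin N → Fin d → ℝ) : ℝ :=
  Real.exp (∑ s, q i s * K l s) / LiK q i K

/-- `o_i(K) := Σ_l P_{il}(K) v_l`. -/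
noncomputable def oiK {N d : ℕ} (q v : Fin N → Fin d → ℝ) (i : Fin N)
    (K : Fin N → Fin d → ℝ) : Fin d → ℝ :=
  fun r => ∑ l, PiK q i l K * v l r

/-- `D_i(K) := do_iᵀ o_i(K)`. -/
noncomputable def DiK {N d : ℕ} (q v dO : Fin N → Fin d → ℝ) (i : Fin N)
    (K : Fin N → Fin d → ℝ) : ℝ :=
  ∑ r, dO i r * oiK q v i K r

/-- `φ(K) := Σ_i do_iᵀ o_i(K)`. -/
noncomputable def phiK {N d : ℕ} (q v dO : Fin N → Fin d → ℝ)
    (K : Fin N → Fin d → ℝ) : ℝ :=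
  ∑ i, DiK q v dO i K

/-
The `j`-th key enters `φ` only through the logits `q_iᵀ k_j`, one per query `i`, and
`D_i = Σ_l P_{il} (do_iᵀ v_l)` is a softmax average of the scores `do_iᵀ v_l`. Moving the
logit `a_j` of a softmax average `Σ_l softmax(a)_l w_l` changes it at rate
`softmax(a)_j (w_j - Σ_l softmax(a)_l w_l)`; the chain rule through `k ↦ q_iᵀ k` and a sum over
`i` give the formula.
-/

open Function

section Softmax

variable {ι : Type*} [Fintype ι]

noncomputable def softmax (a : ι → ℝ) (l : ι) : ℝ :=
  Real.exp (a l) / ∑ m, Real.exp (a m)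

noncomputable def softmaxAvg (w a : ι → ℝ) : ℝ :=
  ∑ l, softmax a l * w l

lemma softmaxAvg_eq_div (w a : ι → ℝ) :
    softmaxAvg w a = (∑ l, Real.exp (a l) * w l) / ∑ l, Real.exp (a l) := by
  simp only [softmaxAvg, softmax, Finset.sum_div, div_mul_eq_mul_div]

variable [DecidableEq ι]

lemma hasDerivAt_sum_exp_update_mul (w a : ι → ℝ) (j : ι) (t : ℝ) :
    HasDerivAt (fun t => ∑ l, Real.exp (update a j t l) * w l) (Real.exp t * w j) t := by
  have hterm (l : ι) : HasDerivAt (fun t => Real.exp (update a j t l) * w l)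
      (if l = j then Real.exp t * w j else 0) t := by
    by_cases hl : l = j
    · subst hl
      simpa using (Real.hasDerivAt_exp t).mul_const (w l)
    · simpa [update_of_ne hl, hl] using hasDerivAt_const t (Real.exp (a l) * w l)
  simpa using HasDerivAt.fun_sum fun l (_ : l ∈ Finset.univ) => hterm l

lemma hasDerivAt_softmaxAvg_update (w a : ι → ℝ) (j : ι) (t : ℝ) :
    HasDerivAt (fun t => softmaxAvg w (update a j t))
      (softmax (update a j t) j * (w j - softmaxAvg w (update a j t))) t := by
  have hZ : (0 : ℝ) < ∑ l, Real.exp (update a j t l) :=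
    Finset.sum_pos (fun l _ => Real.exp_pos _) ⟨j, Finset.mem_univ j⟩
  simp only [softmaxAvg_eq_div]
  refine ((hasDerivAt_sum_exp_update_mul w a j t).div
    (by simpa using hasDerivAt_sum_exp_update_mul 1 a j t) hZ.ne').congr_deriv ?_
  simp only [softmax, update_self]
  field_simp

end Softmax

section DotProduct

variable {ι : Type*} [Fintype ι]

noncomputable def dotProductCLM (c : ι → ℝ) : (ι → ℝ) →L[ℝ] ℝ :=
  ∑ s, c s • ContinuousLinearMap.proj s

@[simp]
lemma dotProductCLM_apply (c y : ι → ℝ) : dotProductCLM c y = ∑ s, c s * y s := by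
  simp [dotProductCLM]

lemma hasFDerivAt_dotProductCLM (c x : ι → ℝ) :
    HasFDerivAt (fun y : ι → ℝ => ∑ s, c s * y s) (dotProductCLM c) x := by
  rw [show (fun y : ι → ℝ => ∑ s, c s * y s) = dotProductCLM c from
    funext fun y => (dotProductCLM_apply c y).symm]
  exact (dotProductCLM c).hasFDerivAt

end DotProduct

section Attention

variable {N d : ℕ} (q v dO : Fin N → Fin d → ℝ)

lemma PiK_eq_softmax (i l : Fin N) (K : Fin N → Fin d → ℝ) :
    PiK q i l K = softmax (fun l => ∑ s, q i s * K l s) l :=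
  rfl

lemma DiK_eq_softmaxAvg (i : Fin N) (K : Fin N → Fin d → ℝ) :
    DiK q v dO i K =
      softmaxAvg (fun l => ∑ r, dO i r * v l r) (fun l => ∑ s, q i s * K l s) := by
  simp only [DiK, oiK, softmaxAvg, PiK_eq_softmax, Finset.mul_sum]
  rw [Finset.sum_comm]
  exact Finset.sum_congr rfl fun l _ => Finset.sum_congr rfl fun r _ => by ring

lemma logits_update (i j : Fin N) (K : Fin N → Fin d → ℝ) (k : Fin d → ℝ) :
    (fun l => ∑ s, q i s * update K j k l s) =
      update (fun l => ∑ s, q i s * K l s) j (∑ s, q i s * k s) :=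
  funext fun l => apply_update (fun _ (x : Fin d → ℝ) => ∑ s, q i s * x s) K j k l

lemma hasFDerivAt_DiK_update (i j : Fin N) (K : Fin N → Fin d → ℝ) (x : Fin d → ℝ) :
    HasFDerivAt (fun kj => DiK q v dO i (update K j kj))
      ((PiK q i j (update K j x) * ((∑ r, dO i r * v j r) - DiK q v dO i (update K j x))) •
        dotProductCLM (q i)) x := by
  simp only [DiK_eq_softmaxAvg, PiK_eq_softmax, logits_update]
  exact (hasDerivAt_softmaxAvg_update _ _ j _).comp_hasFDerivAt x
    (hasFDerivAt_dotProductCLM (q i) x)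

lemma hasFDerivAt_phiK_update (j : Fin N) (K : Fin N → Fin d → ℝ) (x : Fin d → ℝ) :
    HasFDerivAt (fun kj => phiK q v dO (update K j kj))
      (∑ i, (PiK q i j (update K j x) *
          ((∑ r, dO i r * v j r) - DiK q v dO i (update K j x))) •
        dotProductCLM (q i)) x :=
  HasFDerivAt.fun_sum fun i _ => hasFDerivAt_DiK_update q v dO i j K x

end Attention

/-- **Equation (8): the memory-efficient formula for the key gradient `dk_j`.**
With `q_i, v_l, do_i ∈ ℝ^d` fixed and an index `j` fixed, `φ(K) = Σ_i do_iᵀ o_i(K)` is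
differentiable in `k_j`, and its gradient with respect to `k_j` is
`∇_{k_j} φ = Σ_i P_{ij}(K) (do_iᵀ v_j - D_i(K)) q_i`, i.e. the Fréchet derivative of
`k ↦ φ(K[k_j := k])` at `K j`, applied to a direction `h`, equals `(∇_{k_j} φ)ᵀ h`. -/
theorem key_gradient_formula {N d : ℕ} (q v dO : Fin N → Fin d → ℝ) (j : Fin N)
    (K : Fin N → Fin d → ℝ) :
    Differentiable ℝ (fun kj : Fin d → ℝ => phiK q v dO (Function.update K j kj)) ∧
    ∀ h : Fin d → ℝ,
      fderiv ℝ (fun kj : Fin d → ℝ => phiK q v dO (Function.update K j kj)) (K j) h =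
        ∑ s, (∑ i, PiK q i j K * ((∑ r, dO i r * v j r) - DiK q v dO i K) * q i s) * h s := by
  refine ⟨fun x => (hasFDerivAt_phiK_update q v dO j K x).differentiableAt, fun h => ?_⟩
  rw [(hasFDerivAt_phiK_update q v dO j K (K j)).fderiv, update_eq_self]
  simp only [FunLike.coe_sum, FunLike.coe_smul, Finset.sum_apply,
    Pi.smul_apply, dotProductCLM_apply, smul_eq_mul, Finset.mul_sum, Finset.sum_mul]
  rw [Finset.sum_comm]
  exact Finset.sum_congr rfl fun s _ => Finset.sum_congr rfl fun i _ => by ring
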